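/- In the simplicial complex M_6 generated by the difference 5-cycles (1,1,2,1,7), (1,4,3,2,2), (1,2,2,3,4), (1,1,7,1,2), (1,1,2,5,3), (1,1,3,5,2) on ZMod 12, the triple {0, 4, 8} is not a face; hence M_6 does not contain the full 2-skeleton of the 6-cross-polytope with antipodal pairs {j, j+6}, even though {0,4,8} contains no antipodal pair. -/

import Mathlib

/-- The orbit of facets generated by a difference 5-cycle with partial sums
0, a, b, c, d. -/
def orbit18 (a b c d : ZMod 12) : Finset (Finset (ZMod 12)) :=
  Finset.univ.image (fun x : ZMod 12 =>
    ({x, x + a, x + b, x + c, x + d} : Finset (ZMod 12)))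

/-- Facets of M₆: difference 5-cycles (1,1,2,1,7), (1,4,3,2,2), (1,2,2,3,4),
(1,1,7,1,2), (1,1,2,5,3), (1,1,3,5,2). -/
def M6facets : Finset (Finset (ZMod 12)) :=
  orbit18 1 2 4 5 ∪ orbit18 1 5 8 10 ∪ orbit18 1 3 5 8 ∪
  orbit18 1 2 9 10 ∪ orbit18 1 2 4 9 ∪ orbit18 1 2 5 10

/-!
The facets of M₆ are the translates `x + D` of six base blocks `D = {0, a, b, c, d}`, and
`{0, 4, 8} ⊆ x + D` iff `D` contains the translate `-x + {0, 4, 8}`, a residue class mod 4.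
Each base block meets every residue class mod 4 in at most two points, so no facet
contains `{0, 4, 8}`.
-/

open Pointwise

theorem mem_orbit18_iff {a b c d : ZMod 12} {F : Finset (ZMod 12)} :
    F ∈ orbit18 a b c d ↔ ∃ x : ZMod 12, F = x +ᵥ ({0, a, b, c, d} : Finset (ZMod 12)) := by
  simp [orbit18, Finset.vadd_finset_insert, eq_comm]

theorem exists_superset_mem_orbit18_iff {a b c d : ZMod 12} {S : Finset (ZMod 12)} :
    (∃ F ∈ orbit18 a b c d, S ⊆ F) ↔ ∃ t : ZMod 12, t +ᵥ S ⊆ {0, a, b, c, d} := by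
  simp only [mem_orbit18_iff]
  constructor
  · rintro ⟨_, ⟨x, rfl⟩, hS⟩
    exact ⟨-x, Finset.subset_vadd_finset_iff.1 hS⟩
  · rintro ⟨t, hS⟩
    exact ⟨_, ⟨-t, rfl⟩, Finset.subset_vadd_finset_iff.2 (by rwa [neg_neg])⟩

theorem not_vadd_zero_four_eight_subset_base_blocks (t : ZMod 12) :
    ¬ t +ᵥ ({0, 4, 8} : Finset (ZMod 12)) ⊆ {0, 1, 2, 4, 5} ∧
    ¬ t +ᵥ ({0, 4, 8} : Finset (ZMod 12)) ⊆ {0, 1, 5, 8, 10} ∧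
    ¬ t +ᵥ ({0, 4, 8} : Finset (ZMod 12)) ⊆ {0, 1, 3, 5, 8} ∧
    ¬ t +ᵥ ({0, 4, 8} : Finset (ZMod 12)) ⊆ {0, 1, 2, 9, 10} ∧
    ¬ t +ᵥ ({0, 4, 8} : Finset (ZMod 12)) ⊆ {0, 1, 2, 4, 9} ∧
    ¬ t +ᵥ ({0, 4, 8} : Finset (ZMod 12)) ⊆ {0, 1, 2, 5, 10} := by
  simp only [Finset.vadd_finset_insert, Finset.vadd_finset_singleton, vadd_eq_add, add_zero]
  revert t
  decide

theorem not_exists_zero_four_eight_subset_mem_M6facets :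
    ¬ ∃ F ∈ M6facets, ({0, 4, 8} : Finset (ZMod 12)) ⊆ F := by
  simp only [M6facets, Finset.mem_union, or_and_right, exists_or,
    exists_superset_mem_orbit18_iff]
  simp [not_vadd_zero_four_eight_subset_base_blocks]

/-- {0,4,8} contains no antipodal pair but is not a face of M₆, so M₆ does not
contain the full 2-skeleton of the 6-cross-polytope. -/
theorem stmt_18 :
    (¬ ∃ F ∈ M6facets, ({0, 4, 8} : Finset (ZMod 12)) ⊆ F) ∧
    (∀ x ∈ ({0, 4, 8} : Finset (ZMod 12)), x + 6 ∉ ({0, 4, 8} : Finset (ZMod 12))) ∧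
    ¬ (∀ s : Finset (ZMod 12), s.card ≤ 3 → (∀ x ∈ s, x + 6 ∉ s) →
        ∃ F ∈ M6facets, s ⊆ F) := by
  have antipodal_free :
      ∀ x ∈ ({0, 4, 8} : Finset (ZMod 12)), x + 6 ∉ ({0, 4, 8} : Finset (ZMod 12)) := by
    decide
  exact ⟨not_exists_zero_four_eight_subset_mem_M6facets, antipodal_free, fun h =>
    not_exists_zero_four_eight_subset_mem_M6facets (h _ Finset.card_le_three antipodal_free)⟩
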